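/- Let v₁ = (0, φ) and v₂ = (d_θ, φ) be two points at latitude φ on the unit sphere (in polar coordinates) with ‖v₁ − v₂‖ = r, and let u = (τ, ψ) be a point with ‖v₁ − u‖ = ‖v₂ − u‖ = r and ψ < φ. Then τ = d_θ/2 = arcsin(r/(2 cos φ)). -/

import Mathlib

/-!
Chordal distance on the unit sphere is `‖p - q‖² = 2 - 2⟨p, q⟩`. Equidistance of `u = (τ, ψ)`
from `v₁ = (0, φ)` and `v₂ = (dθ, φ)` therefore reads `cos φ cos ψ (cos τ - cos (dθ - τ)) = 0`,
i.e. `sin (dθ / 2) sin (τ - dθ / 2) = 0`. On a common latitude the chord is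
`2 cos φ |sin (Δθ / 2)|`, so `r > 0` rules out the first factor and the angle bounds force
`τ = dθ / 2`; the same chord formula gives `sin (dθ / 2) = r / (2 cos φ)`.
-/

open Metric Real
noncomputable section
abbrev E3 := EuclideanSpace ℝ (Fin 3)

/-- The point at longitude `θ` and latitude `φ` on the unit sphere. -/
def polar (θ φ : ℝ) : E3 :=
  (WithLp.equiv 2 (Fin 3 → ℝ)).symm ![Real.cos φ * Real.cos θ, Real.cos φ * Real.sin θ, Real.sin φ]

lemma norm_polar_sub_polar_sq (θ₁ φ₁ θ₂ φ₂ : ℝ) :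
    ‖polar θ₁ φ₁ - polar θ₂ φ₂‖ ^ 2 =
      2 - 2 * (cos φ₁ * cos φ₂ * cos (θ₁ - θ₂) + sin φ₁ * sin φ₂) := by
  rw [EuclideanSpace.norm_eq, sq_sqrt (by positivity)]
  simp only [polar, Fin.sum_univ_three, Real.norm_eq_abs, sq_abs, WithLp.equiv_symm_apply,
    PiLp.sub_apply, cos_sub]
  simp only [Matrix.cons_val_zero, Matrix.cons_val_one, Matrix.cons_val_two, Matrix.head_cons,
    Matrix.tail_cons]
  linear_combination (cos φ₁ ^ 2) * sin_sq_add_cos_sq θ₁ + (cos φ₂ ^ 2) * sin_sq_add_cos_sq θ₂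
    + sin_sq_add_cos_sq φ₁ + sin_sq_add_cos_sq φ₂

lemma norm_polar_sub_polar_of_latitude_eq (θ₁ θ₂ φ : ℝ) (hφ : 0 ≤ cos φ) :
    ‖polar θ₁ φ - polar θ₂ φ‖ = 2 * cos φ * |sin ((θ₁ - θ₂) / 2)| := by
  have hcos : cos (θ₁ - θ₂) = 1 - 2 * sin ((θ₁ - θ₂) / 2) ^ 2 := by
    have h := cos_two_mul ((θ₁ - θ₂) / 2)
    rw [mul_div_cancel₀ _ two_ne_zero] at h
    linear_combination h + 2 * sin_sq_add_cos_sq ((θ₁ - θ₂) / 2)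
  rw [← sq_eq_sq₀ (norm_nonneg _) (by positivity), norm_polar_sub_polar_sq, hcos, mul_pow, sq_abs]
  linear_combination -2 * sin_sq_add_cos_sq φ

lemma cos_sub_eq_cos_sub_of_norm_polar_sub_eq {θ₁ θ₂ φ τ ψ : ℝ} (hφ : cos φ ≠ 0)
    (hψ : cos ψ ≠ 0) (h : ‖polar θ₁ φ - polar τ ψ‖ = ‖polar θ₂ φ - polar τ ψ‖) :
    cos (θ₁ - τ) = cos (θ₂ - τ) := by
  have hsq := congrArg (· ^ 2) h
  simp only [norm_polar_sub_polar_sq] at hsq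
  have : cos φ * cos ψ * (cos (θ₁ - τ) - cos (θ₂ - τ)) = 0 := by linear_combination -hsq / 2
  simpa [hφ, hψ, sub_eq_zero] using this

lemma eq_half_of_cos_eq_cos_sub {d τ : ℝ} (hd : sin (d / 2) ≠ 0) (hτ : |τ - d / 2| < π)
    (h : cos τ = cos (d - τ)) : τ = d / 2 := by
  have hprod : sin (d / 2) * sin (τ - d / 2) = 0 := by
    have := cos_sub_cos τ (d - τ)
    rw [h, sub_self, show (τ + (d - τ)) / 2 = d / 2 by ring,
      show (τ - (d - τ)) / 2 = τ - d / 2 by ring] at this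
    linear_combination this / 2
  have hsin := (mul_eq_zero.mp hprod).resolve_left hd
  rw [abs_lt] at hτ
  linarith [(sin_eq_zero_iff_of_lt_of_lt hτ.1 hτ.2).mp hsin]

theorem stmt6_general (φ ψ τ dθ r : ℝ) (hφ : φ < π / 2)
    (hψ : -(π / 2) < ψ) (hψφ : ψ < φ)
    (hr0 : 0 < r)
    (hdθ0 : 0 ≤ dθ) (hdθ : dθ ≤ π) (hτ0 : 0 ≤ τ) (hτ : τ ≤ π / 2)
    (hv : ‖polar 0 φ - polar dθ φ‖ = r)
    (hu1 : ‖polar 0 φ - polar τ ψ‖ = r) (hu2 : ‖polar dθ φ - polar τ ψ‖ = r) :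
    τ = dθ / 2 ∧ τ = Real.arcsin (r / (2 * Real.cos φ)) := by
  have hcφ : 0 < cos φ := cos_pos_of_mem_Ioo ⟨by linarith, hφ⟩
  have hcψ : 0 < cos ψ := cos_pos_of_mem_Ioo ⟨hψ, by linarith⟩
  have hchord : r = 2 * cos φ * sin (dθ / 2) := by
    rw [← hv, norm_polar_sub_polar_of_latitude_eq _ _ _ hcφ.le, zero_sub, neg_div, sin_neg,
      abs_neg, abs_of_nonneg (sin_nonneg_of_nonneg_of_le_pi (by linarith) (by linarith))]
  have hsin : sin (dθ / 2) = r / (2 * cos φ) := by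
    rw [hchord]; field_simp
  have hcos : cos τ = cos (dθ - τ) := by
    simpa using cos_sub_eq_cos_sub_of_norm_polar_sub_eq hcφ.ne' hcψ.ne' (hu1.trans hu2.symm)
  have hhalf : τ = dθ / 2 :=
    eq_half_of_cos_eq_cos_sub (by rw [hsin]; positivity)
      (abs_lt.mpr ⟨by linarith, by linarith⟩) hcos
  refine ⟨hhalf, ?_⟩
  rw [← hsin, arcsin_sin (by linarith) (by linarith), hhalf]

/-- If `v₁ = (0, φ)` and `v₂ = (dθ, φ)` are two points at latitude `φ` with chordal
distance `r`, and `u = (τ, ψ)` is equidistant from both at chordal distance `r` with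
`ψ < φ`, then `τ = dθ/2 = arcsin (r / (2 cos φ))`. -/
theorem stmt6 (φ ψ τ dθ r : ℝ) (hφ0 : 0 ≤ φ) (hφ : φ < π / 2)
    (hψ : -(π / 2) < ψ) (hψφ : ψ < φ)
    (hr0 : 0 < r) (hr : r ≤ 2 * Real.cos φ)
    (hdθ0 : 0 ≤ dθ) (hdθ : dθ ≤ π) (hτ0 : 0 ≤ τ) (hτ : τ ≤ π / 2)
    (hv : ‖polar 0 φ - polar dθ φ‖ = r)
    (hu1 : ‖polar 0 φ - polar τ ψ‖ = r) (hu2 : ‖polar dθ φ - polar τ ψ‖ = r) :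
    τ = dθ / 2 ∧ τ = Real.arcsin (r / (2 * Real.cos φ)) :=
  stmt6_general φ ψ τ dθ r hφ hψ hψφ hr0 hdθ0 hdθ hτ0 hτ hv hu1 hu2
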